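/- arXiv:2309.09146 — 3 statements merged into one kernel-verified Lean document; each statement's English description precedes it below -/
import Mathlib

section
/- Fix (s,a) ∈ S × A and v : S → ℝ, and let n = |S|. Let σ : {1,…,n} → S be a bijection such that v(σ(1)) ≥ v(σ(2)) ≥ … ≥ v(σ(n)), and let k ∈ {1,…,n} satisfy P̲(σ(k),s,a) ≤ 1 − ∑_{i<k} P̄(σ(i),s,a) − ∑_{i>k} P̲(σ(i),s,a) ≤ P̄(σ(k),s,a). Define q* : S → ℝ by q*(σ(i)) = P̄(σ(i),s,a) for i < k, q*(σ(k)) = 1 − ∑_{i<k} P̄(σ(i),s,a) − ∑_{i>k} P̲(σ(i),s,a), and q*(σ(i)) = P̲(σ(i),s,a) for i > k. Then q* ∈ Δ_{s,a}, and for every p ∈ Δ_{s,a}, ∑_{s'∈S} p(s') v(s') ≤ ∑_{s'∈S} q*(s') v(s'); in particular max_{p ∈ Δ_{s,a}} ∑_{s'∈S} p(s') v(s') = ∑_{s'∈S} q*(s') v(s'). -/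
/-- The ambiguity set `Δ_{s,a}` of transition probability vectors compatible with the
interval bounds `Plow`, `Pup` at state `s` and action `a`. -/
def ambiguitySet {S A : Type*} [Fintype S] (Plow Pup : S → S → A → ℝ) (s : S) (a : A) :
    Set (S → ℝ) :=
  {p | (∀ s', 0 ≤ p s' ∧ p s' ≤ 1 ∧ Plow s' s a ≤ p s' ∧ p s' ≤ Pup s' s a) ∧
    ∑ s', p s' = 1}

/-- `min_{p ∈ Δ_{s,a}} ∑_{s' ∈ S} p(s') v(s')`. -/
noncomputable def minExp {S A : Type*} [Fintype S] (Plow Pup : S → S → A → ℝ)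
    (s : S) (a : A) (v : S → ℝ) : ℝ :=
  sInf ((fun p : S → ℝ => ∑ s', p s' * v s') '' ambiguitySet Plow Pup s a)

/-- `max_{p ∈ Δ_{s,a}} ∑_{s' ∈ S} p(s') v(s')`. -/
noncomputable def maxExp {S A : Type*} [Fintype S] (Plow Pup : S → S → A → ℝ)
    (s : S) (a : A) (v : S → ℝ) : ℝ :=
  sSup ((fun p : S → ℝ => ∑ s', p s' * v s') '' ambiguitySet Plow Pup s a)

/-- The pessimistic Bellman-policy operator
`F̲(v,π)(s) = R̲(s,π(s)) + γ · min_{p ∈ Δ_{s,π(s)}} ∑_{s'} p(s') v(s')`. -/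
noncomputable def Fpess {S A : Type*} [Fintype S] (Plow Pup : S → S → A → ℝ)
    (Rlow : S → A → ℝ) (γ : ℝ) (v : S → ℝ) (π : S → A) (s : S) : ℝ :=
  Rlow s (π s) + γ * minExp Plow Pup s (π s) v

/-- The optimistic Bellman-policy operator
`F̄(v,π)(s) = R̄(s,π(s)) + γ · max_{p ∈ Δ_{s,π(s)}} ∑_{s'} p(s') v(s')`. -/
noncomputable def Fopt {S A : Type*} [Fintype S] (Plow Pup : S → S → A → ℝ)
    (Rup : S → A → ℝ) (γ : ℝ) (v : S → ℝ) (π : S → A) (s : S) : ℝ :=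
  Rup s (π s) + γ * maxExp Plow Pup s (π s) v

/-- The pessimistic interval Bellman operator
`G̲(v)(s) = sup_{a ∈ A} [ R̲(s,a) + γ · min_{p ∈ Δ_{s,a}} ∑_{s'} p(s') v(s') ]`. -/
noncomputable def Gpess {S A : Type*} [Fintype S] (Plow Pup : S → S → A → ℝ)
    (Rlow : S → A → ℝ) (γ : ℝ) (v : S → ℝ) (s : S) : ℝ :=
  ⨆ a : A, (Rlow s a + γ * minExp Plow Pup s a v)

/-- The optimistic interval Bellman operator
`Ḡ(v)(s) = sup_{a ∈ A} [ R̄(s,a) + γ · max_{p ∈ Δ_{s,a}} ∑_{s'} p(s') v(s') ]`. -/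
noncomputable def Gopt {S A : Type*} [Fintype S] (Plow Pup : S → S → A → ℝ)
    (Rup : S → A → ℝ) (γ : ℝ) (v : S → ℝ) (s : S) : ℝ :=
  ⨆ a : A, (Rup s a + γ * maxExp Plow Pup s a v)

/-!
Greedy exchange: sort the states by decreasing value and give each state as much mass as
its bounds allow, in that order. If `p ∈ Δ_{s,a}`, the difference `q* - p` has total mass `0`,
is nonnegative before the pivot `k` and nonpositive after it; as `v ∘ σ` is antitone,
`∑ (q* - p) (v - v(σ k)) ≥ 0` termwise, which is `∑ p v ≤ ∑ q* v`.
-/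

open Finset

theorem Finset.sum_eq_sum_lt_add_add_sum_gt {ι M : Type*} [Fintype ι] [LinearOrder ι]
    [AddCommMonoid M] (f : ι → M) (k : ι) :
    ∑ i, f i = ∑ i ∈ univ.filter (· < k), f i + f k + ∑ i ∈ univ.filter (k < ·), f i := by
  have hge : univ.filter (¬ · < k) = insert k (univ.filter (k < ·)) := by
    ext i
    simp [le_iff_eq_or_lt, eq_comm]
  rw [← sum_filter_add_sum_filter_not univ (· < k), hge, sum_insert (by simp), add_assoc]

theorem sum_mul_le_sum_mul_of_antitone_of_pivot {ι : Type*} [Fintype ι] [LinearOrder ι]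
    {p q w : ι → ℝ} (hw : Antitone w) (k : ι) (hsum : ∑ i, p i = ∑ i, q i)
    (hlt : ∀ i < k, p i ≤ q i) (hgt : ∀ i, k < i → q i ≤ p i) :
    ∑ i, p i * w i ≤ ∑ i, q i * w i := by
  have hterm : ∀ i, (q i - p i) * w k ≤ (q i - p i) * w i := by
    intro i
    rcases lt_trichotomy i k with h | rfl | h
    · exact mul_le_mul_of_nonneg_left (hw h.le) (sub_nonneg.2 (hlt i h))
    · rfl
    · exact mul_le_mul_of_nonpos_left (hw h.le) (sub_nonpos.2 (hgt i h))
  have := calc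
    (0 : ℝ) = ∑ i, (q i - p i) * w k := by
      rw [← sum_mul, sum_sub_distrib, hsum, sub_self, zero_mul]
    _ ≤ ∑ i, (q i - p i) * w i := sum_le_sum fun i _ => hterm i
    _ = ∑ i, q i * w i - ∑ i, p i * w i := by rw [← sum_sub_distrib]; simp only [sub_mul]
  linarith

theorem mem_ambiguitySet_of_bounds {S A : Type*} [Fintype S] {Plow Pup : S → S → A → ℝ}
    {s : S} {a : A} {p : S → ℝ} (hlow : ∀ s', 0 ≤ Plow s' s a) (hup : ∀ s', Pup s' s a ≤ 1)
    (hp : ∀ s', Plow s' s a ≤ p s' ∧ p s' ≤ Pup s' s a) (hsum : ∑ s', p s' = 1) :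
    p ∈ ambiguitySet Plow Pup s a :=
  ⟨fun s' => ⟨(hlow s').trans (hp s').1, (hp s').2.trans (hup s'), hp s'⟩, hsum⟩

theorem maxExp_closed_form_general {S A : Type*} [Fintype S]
    (Plow Pup : S → S → A → ℝ)
    (hP01 : ∀ s' s a, 0 ≤ Plow s' s a ∧ Pup s' s a ≤ 1)
    (hPle : ∀ s' s a, Plow s' s a ≤ Pup s' s a)
    (s : S) (a : A) (v : S → ℝ)
    (σ : Fin (Fintype.card S) ≃ S) (hσ : Antitone fun i => v (σ i))
    (k : Fin (Fintype.card S)) (ξ : ℝ)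
    (hξ : ξ = 1 - (∑ i ∈ Finset.univ.filter (fun i => i < k), Pup (σ i) s a)
      - ∑ i ∈ Finset.univ.filter (fun i => k < i), Plow (σ i) s a)
    (hk : Plow (σ k) s a ≤ ξ ∧ ξ ≤ Pup (σ k) s a)
    (qstar : S → ℝ)
    (hqstar : ∀ i : Fin (Fintype.card S),
      qstar (σ i) = if i < k then Pup (σ i) s a
        else if i = k then ξ else Plow (σ i) s a) :
    qstar ∈ ambiguitySet Plow Pup s a ∧
    (∀ p ∈ ambiguitySet Plow Pup s a,
      (∑ s', p s' * v s') ≤ ∑ s', qstar s' * v s') ∧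
    maxExp Plow Pup s a v = ∑ s', qstar s' * v s' := by
  have hq_lt : ∀ i < k, qstar (σ i) = Pup (σ i) s a := fun i h => by simp [hqstar, h]
  have hq_gt : ∀ i, k < i → qstar (σ i) = Plow (σ i) s a := fun i h => by
    simp [hqstar, h.not_gt, h.ne']
  have hsum : ∑ s', qstar s' = 1 := by
    rw [← σ.sum_comp, Finset.sum_eq_sum_lt_add_add_sum_gt _ k,
      sum_congr rfl fun i hi => hq_lt i (mem_filter.1 hi).2,
      sum_congr rfl fun i hi => hq_gt i (mem_filter.1 hi).2, hqstar k, if_neg k.lt_irrefl,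
      if_pos rfl, hξ]
    ring
  have hmem : qstar ∈ ambiguitySet Plow Pup s a := by
    refine mem_ambiguitySet_of_bounds (fun s' => (hP01 s' s a).1) (fun s' => (hP01 s' s a).2)
      (σ.forall_congr_right.1 fun i => ?_) hsum
    rcases lt_trichotomy i k with h | rfl | h
    · rw [hq_lt i h]; exact ⟨hPle _ _ _, le_rfl⟩
    · simpa [hqstar] using hk
    · rw [hq_gt i h]; exact ⟨le_rfl, hPle _ _ _⟩
  have hmax : ∀ p ∈ ambiguitySet Plow Pup s a, ∑ s', p s' * v s' ≤ ∑ s', qstar s' * v s' := by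
    rintro p ⟨hp, hp_sum⟩
    rw [← σ.sum_comp (fun s' => p s' * v s'), ← σ.sum_comp (fun s' => qstar s' * v s')]
    refine sum_mul_le_sum_mul_of_antitone_of_pivot hσ k ?_ (fun i h => ?_) (fun i h => ?_)
    · rw [σ.sum_comp, σ.sum_comp, hp_sum, hsum]
    · exact hq_lt i h ▸ (hp (σ i)).2.2.2
    · exact hq_gt i h ▸ (hp (σ i)).2.2.1
  have hgreatest : IsGreatest ((fun p : S → ℝ => ∑ s', p s' * v s') '' ambiguitySet Plow Pup s a)
      (∑ s', qstar s' * v s') := ⟨Set.mem_image_of_mem _ hmem, Set.forall_mem_image.2 hmax⟩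
  exact ⟨hmem, hmax, hgreatest.csSup_eq⟩

/-- closed-form maximizer of the expected value over the ambiguity set:
the vector `qstar` that assigns the upper bound to the states with the largest values
of `v`, the lower bound to the states with the smallest values, and the residual mass
to the pivot state, attains the maximum of `∑ p(s') v(s')` over `Δ_{s,a}`. -/
theorem maxExp_closed_form {S A : Type*} [Fintype S] [Nonempty S] [Nonempty A]
    (Plow Pup : S → S → A → ℝ)
    (hP01 : ∀ s' s a, 0 ≤ Plow s' s a ∧ Pup s' s a ≤ 1)
    (hPle : ∀ s' s a, Plow s' s a ≤ Pup s' s a)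
    (hPsum : ∀ s a, (∑ s', Plow s' s a) ≤ 1 ∧ 1 ≤ ∑ s', Pup s' s a)
    (s : S) (a : A) (v : S → ℝ)
    (σ : Fin (Fintype.card S) ≃ S) (hσ : Antitone fun i => v (σ i))
    (k : Fin (Fintype.card S)) (ξ : ℝ)
    (hξ : ξ = 1 - (∑ i ∈ Finset.univ.filter (fun i => i < k), Pup (σ i) s a)
      - ∑ i ∈ Finset.univ.filter (fun i => k < i), Plow (σ i) s a)
    (hk : Plow (σ k) s a ≤ ξ ∧ ξ ≤ Pup (σ k) s a)
    (qstar : S → ℝ)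
    (hqstar : ∀ i : Fin (Fintype.card S),
      qstar (σ i) = if i < k then Pup (σ i) s a
        else if i = k then ξ else Plow (σ i) s a) :
    qstar ∈ ambiguitySet Plow Pup s a ∧
    (∀ p ∈ ambiguitySet Plow Pup s a,
      (∑ s', p s' * v s') ≤ ∑ s', qstar s' * v s') ∧
    maxExp Plow Pup s a v = ∑ s', qstar s' * v s' :=
  maxExp_closed_form_general Plow Pup hP01 hPle s a v σ hσ k ξ hξ hk qstar hqstar
end

section
/- The pessimistic interval Bellman operator G̲ has a unique fixed point V*_p ∈ ℝ^S (i.e., G̲(V*_p) = V*_p), and the pessimistic value iteration v^{k+1} = G̲(v^k) converges to it globally exponentially: for every v^0 ∈ ℝ^S and every k ≥ 0, ‖v^k − V*_p‖∞ ≤ γ^k ‖v^0 − V*_p‖∞. -/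
section AuxLemmas
variable {S A : Type*} [Fintype S]

lemma ambiguitySet_nonempty' (Plow Pup : S → S → A → ℝ) (s : S) (a : A)
    (hP01 : ∀ s' s a, 0 ≤ Plow s' s a ∧ Pup s' s a ≤ 1)
    (hPle : ∀ s' s a, Plow s' s a ≤ Pup s' s a)
    (hPsum : ∀ s a, (∑ s', Plow s' s a) ≤ 1 ∧ 1 ≤ ∑ s', Pup s' s a) :
    ∃ p : S → ℝ, (∀ s', 0 ≤ p s' ∧ p s' ≤ 1 ∧ Plow s' s a ≤ p s' ∧ p s' ≤ Pup s' s a) ∧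
      ∑ s', p s' = 1 := by
  set d : ℝ := ∑ s', (Pup s' s a - Plow s' s a) with hd
  have hd0 : 0 ≤ d := Finset.sum_nonneg fun s' _ => sub_nonneg.2 (hPle s' s a)
  by_cases hdz : d = 0
  · refine ⟨fun s' => Plow s' s a, fun s' => ?_, ?_⟩
    · exact ⟨(hP01 s' s a).1, le_trans (hPle s' s a) (hP01 s' s a).2, le_refl _, hPle s' s a⟩
    · have h1 := (hPsum s a).1
      have h2 := (hPsum s a).2
      have : ∑ s', Pup s' s a = ∑ s', Plow s' s a := by
        have := Finset.sum_sub_distrib (f := fun s' => Pup s' s a) (g := fun s' => Plow s' s a)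
          (s := Finset.univ)
        linarith [hdz ▸ hd ▸ this]
      linarith
  · have hdpos : 0 < d := lt_of_le_of_ne hd0 (Ne.symm hdz)
    set t : ℝ := (1 - ∑ s', Plow s' s a) / d with ht
    have ht0 : 0 ≤ t := div_nonneg (by linarith [(hPsum s a).1]) hd0
    have hsub : ∑ s', Pup s' s a - ∑ s', Plow s' s a = d := by
      rw [hd, Finset.sum_sub_distrib]
    have ht1 : t ≤ 1 := by
      rw [ht, div_le_one hdpos]
      linarith [(hPsum s a).2]
    refine ⟨fun s' => Plow s' s a + t * (Pup s' s a - Plow s' s a), fun s' => ?_, ?_⟩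
    · have h1 : 0 ≤ t * (Pup s' s a - Plow s' s a) :=
        mul_nonneg ht0 (sub_nonneg.2 (hPle s' s a))
      have h2 : t * (Pup s' s a - Plow s' s a) ≤ Pup s' s a - Plow s' s a := by
        nlinarith [sub_nonneg.2 (hPle s' s a)]
      have := (hP01 s' s a).1
      have := (hP01 s' s a).2
      refine ⟨?_, ?_, ?_, ?_⟩ <;> · beta_reduce; linarith
    · rw [Finset.sum_add_distrib, ← Finset.mul_sum, ← hd, ht]
      field_simp
      ring

/-- For any probability vector in the ambiguity set, the expectation is within ‖v‖. -/
lemma exp_abs_le (p v : S → ℝ) (h0 : ∀ s', 0 ≤ p s') (h1 : ∑ s', p s' = 1) :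
    |∑ s', p s' * v s'| ≤ ‖v‖ := by
  calc |∑ s', p s' * v s'| ≤ ∑ s', |p s' * v s'| := Finset.abs_sum_le_sum_abs _ _
    _ ≤ ∑ s', p s' * ‖v‖ := by
        apply Finset.sum_le_sum
        intro s' _
        rw [abs_mul, abs_of_nonneg (h0 s')]
        exact mul_le_mul_of_nonneg_left ((Real.norm_eq_abs _ ▸ norm_le_pi_norm v s')) (h0 s')
    _ = ‖v‖ := by rw [← Finset.sum_mul, h1, one_mul]
end AuxLemmas


section AuxLemmas2
variable {S A : Type*} [Fintype S]

lemma minExp_bdd (Plow Pup : S → S → A → ℝ) (s : S) (a : A)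
    (hne : (ambiguitySet Plow Pup s a).Nonempty) (v : S → ℝ) :
    -‖v‖ ≤ minExp Plow Pup s a v ∧ minExp Plow Pup s a v ≤ ‖v‖ := by
  have hlb : ∀ x ∈ (fun p : S → ℝ => ∑ s', p s' * v s') '' ambiguitySet Plow Pup s a,
      -‖v‖ ≤ x := by
    rintro x ⟨p, hp, rfl⟩
    have := exp_abs_le p v (fun s' => (hp.1 s').1) hp.2
    linarith [(abs_le.mp this).1]
  obtain ⟨p0, hp0⟩ := hne
  constructor
  · exact le_csInf ⟨_, Set.mem_image_of_mem _ hp0⟩ hlb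
  · refine le_trans (csInf_le ⟨-‖v‖, hlb⟩ (Set.mem_image_of_mem _ hp0)) ?_
    have := exp_abs_le p0 v (fun s' => (hp0.1 s').1) hp0.2
    linarith [(abs_le.mp this).2]

lemma minExp_lip (Plow Pup : S → S → A → ℝ) (s : S) (a : A)
    (hne : (ambiguitySet Plow Pup s a).Nonempty) (v w : S → ℝ) :
    minExp Plow Pup s a v ≤ minExp Plow Pup s a w + ‖v - w‖ := by
  have h : minExp Plow Pup s a v - ‖v - w‖ ≤ minExp Plow Pup s a w := by
    apply le_csInf (hne.image _)
    rintro x ⟨p, hp, rfl⟩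
    have h0 : ∀ s', 0 ≤ p s' := fun s' => (hp.1 s').1
    have hview : minExp Plow Pup s a v ≤ ∑ s', p s' * v s' := by
      have hlb : ∀ x ∈ (fun p : S → ℝ => ∑ s', p s' * v s') '' ambiguitySet Plow Pup s a,
          -‖v‖ ≤ x := by
        rintro x ⟨q, hq, rfl⟩
        have := exp_abs_le q v (fun s' => (hq.1 s').1) hq.2
        linarith [(abs_le.mp this).1]
      exact csInf_le ⟨-‖v‖, hlb⟩ (Set.mem_image_of_mem _ hp)
    have hdiff : |∑ s', p s' * (v - w) s'| ≤ ‖v - w‖ := exp_abs_le p (v - w) h0 hp.2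
    have hsplit : ∑ s', p s' * (v - w) s' = (∑ s', p s' * v s') - ∑ s', p s' * w s' := by
      rw [← Finset.sum_sub_distrib]
      exact Finset.sum_congr rfl fun s' _ => by simp [Pi.sub_apply]; ring
    rw [hsplit] at hdiff
    linarith [(abs_le.mp hdiff).2]
  linarith

end AuxLemmas2

/-- the pessimistic interval Bellman operator has a unique fixed point, and
pessimistic value iteration converges to it globally exponentially with rate γ. -/
theorem Gpess_fixed_point_and_convergence {S A : Type*} [Fintype S] [Nonempty S] [Nonempty A]
    (γ : ℝ) (hγ0 : 0 < γ) (hγ1 : γ < 1)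
    (Plow Pup : S → S → A → ℝ)
    (hP01 : ∀ s' s a, 0 ≤ Plow s' s a ∧ Pup s' s a ≤ 1)
    (hPle : ∀ s' s a, Plow s' s a ≤ Pup s' s a)
    (hPsum : ∀ s a, (∑ s', Plow s' s a) ≤ 1 ∧ 1 ≤ ∑ s', Pup s' s a)
    (Rlow : S → A → ℝ) (hRbdd : ∀ s, BddAbove (Set.range fun a => Rlow s a)) :
    (∃! Vp : S → ℝ, Gpess Plow Pup Rlow γ Vp = Vp) ∧
    (∀ Vp : S → ℝ, Gpess Plow Pup Rlow γ Vp = Vp →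
      ∀ v0 : S → ℝ, ∀ k : ℕ,
        ‖(Gpess Plow Pup Rlow γ)^[k] v0 - Vp‖ ≤ γ ^ k * ‖v0 - Vp‖) := by
  classical
  have hne : ∀ s a, (ambiguitySet Plow Pup s a).Nonempty := fun s a =>
    ambiguitySet_nonempty' Plow Pup s a hP01 hPle hPsum
  set f := Gpess Plow Pup Rlow γ with hf
  -- pointwise contraction bound
  have hGdiff : ∀ v w : S → ℝ, ∀ s : S, f v s ≤ f w s + γ * ‖v - w‖ := by
    intro v w s
    obtain ⟨M, hM⟩ := hRbdd s
    have hbddw : BddAbove (Set.range fun a => Rlow s a + γ * minExp Plow Pup s a w) := by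
      refine ⟨M + γ * ‖w‖, ?_⟩
      rintro x ⟨a, rfl⟩
      have h1 := hM (Set.mem_range_self a)
      have h2 := (minExp_bdd Plow Pup s a (hne s a) w).2
      have := mul_le_mul_of_nonneg_left h2 hγ0.le
      simp only
      linarith
    apply ciSup_le
    intro a
    have h1 := minExp_lip Plow Pup s a (hne s a) v w
    have h2 : Rlow s a + γ * minExp Plow Pup s a w ≤ f w s :=
      le_ciSup hbddw a
    nlinarith
  have hdist : ∀ v w : S → ℝ, dist (f v) (f w) ≤ γ * dist v w := by
    intro v w
    have hnn : 0 ≤ γ * dist v w := mul_nonneg hγ0.le dist_nonneg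
    rw [dist_pi_le_iff hnn]
    intro s
    rw [Real.dist_eq, abs_le]
    have hvw : ‖v - w‖ = dist v w := (dist_eq_norm v w).symm
    constructor
    · have := hGdiff w v s
      rw [show ‖w - v‖ = dist v w by rw [← hvw, norm_sub_rev]] at this
      linarith
    · have := hGdiff v w s
      rw [hvw] at this
      linarith
  set K : NNReal := ⟨γ, hγ0.le⟩ with hK
  have hLip : LipschitzWith K f :=
    LipschitzWith.of_dist_le_mul fun v w => by exact hdist v w
  have hC : ContractingWith K f := ⟨by exact_mod_cast hγ1, hLip⟩
  constructor
  · exact ⟨ContractingWith.fixedPoint f hC, hC.fixedPoint_isFixedPt,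
      fun y hy => hC.fixedPoint_unique hy⟩
  · intro Vp hVp v0 k
    have hfix : Function.IsFixedPt f Vp := hVp
    have hit : f^[k] Vp = Vp := hfix.iterate k
    have hlk := (hLip.iterate k).dist_le_mul v0 Vp
    rw [hit] at hlk
    rw [show ((K ^ k : NNReal) : ℝ) = γ ^ k by push_cast [hK]; rfl] at hlk
    rw [dist_eq_norm, dist_eq_norm] at hlk
    exact hlk
end

section
/- For every policy π : S → A, if V_π ∈ ℝ^S is a fixed point of the map v ↦ F̲(v,π) (i.e., F̲(V_π,π) = V_π) and V*_p ∈ ℝ^S is a fixed point of G̲ (i.e., G̲(V*_p) = V*_p), then V_π(s) ≤ V*_p(s) for all s ∈ S. -/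
open Finset

/-! Put `c = max_s (V_π s - V*_p s)`. Since `V*_p` is a fixed point of the supremum
over actions, `V*_p ≥ F̲(V*_p, π)`, and the minimal expectation moves by at most `c` when its
argument does, so at a maximizing state `c ≤ γ c`; with `γ < 1` this forces `c ≤ 0`. -/

theorem abs_sum_mul_le_norm_of_sum_eq_one {ι : Type*} [Fintype ι] {p : ι → ℝ} (v : ι → ℝ)
    (hp : ∀ i, 0 ≤ p i) (hp1 : ∑ i, p i = 1) : |∑ i, p i * v i| ≤ ‖v‖ :=
  calc |∑ i, p i * v i| ≤ ∑ i, |p i * v i| := abs_sum_le_sum_abs _ _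
    _ ≤ ∑ i, p i * ‖v‖ := sum_le_sum fun i _ => by
      rw [abs_mul, abs_of_nonneg (hp i)]
      exact mul_le_mul_of_nonneg_left (norm_le_pi_norm v i) (hp i)
    _ = ‖v‖ := by rw [← sum_mul, hp1, one_mul]

section minExp

variable {S A : Type*} [Fintype S] (Plow Pup : S → S → A → ℝ) (s : S) (a : A)

theorem abs_sum_mul_le_norm_of_mem_ambiguitySet {p : S → ℝ}
    (hp : p ∈ ambiguitySet Plow Pup s a) (v : S → ℝ) : |∑ s', p s' * v s'| ≤ ‖v‖ :=
  abs_sum_mul_le_norm_of_sum_eq_one v (fun s' => (hp.1 s').1) hp.2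

theorem bddBelow_expectations_ambiguitySet (v : S → ℝ) :
    BddBelow ((fun p : S → ℝ => ∑ s', p s' * v s') '' ambiguitySet Plow Pup s a) := by
  refine ⟨-‖v‖, ?_⟩
  rintro _ ⟨p, hp, rfl⟩
  exact neg_le_of_abs_le (abs_sum_mul_le_norm_of_mem_ambiguitySet Plow Pup s a hp v)

theorem minExp_le_sum {p : S → ℝ} (hp : p ∈ ambiguitySet Plow Pup s a) (v : S → ℝ) :
    minExp Plow Pup s a v ≤ ∑ s', p s' * v s' :=
  csInf_le (bddBelow_expectations_ambiguitySet Plow Pup s a v) ⟨p, hp, rfl⟩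

theorem abs_minExp_le_norm (v : S → ℝ) : |minExp Plow Pup s a v| ≤ ‖v‖ := by
  rcases (ambiguitySet Plow Pup s a).eq_empty_or_nonempty with hempty | ⟨p, hp⟩
  · simp only [minExp, hempty, Set.image_empty, Real.sInf_empty, abs_zero, norm_nonneg]
  refine abs_le.2 ⟨le_csInf ⟨_, p, hp, rfl⟩ ?_, ?_⟩
  · rintro _ ⟨q, hq, rfl⟩
    exact neg_le_of_abs_le (abs_sum_mul_le_norm_of_mem_ambiguitySet Plow Pup s a hq v)
  · exact (minExp_le_sum Plow Pup s a hp v).trans 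
      (le_of_abs_le (abs_sum_mul_le_norm_of_mem_ambiguitySet Plow Pup s a hp v))

/-- With an empty ambiguity set both sides reduce to `sInf ∅ = 0`, hence `0 ≤ c`. -/
theorem minExp_le_minExp_add {v w : S → ℝ} {c : ℝ} (hc : 0 ≤ c)
    (hvw : ∀ s', v s' ≤ w s' + c) :
    minExp Plow Pup s a v ≤ minExp Plow Pup s a w + c := by
  rcases (ambiguitySet Plow Pup s a).eq_empty_or_nonempty with hempty | hne
  · simpa only [minExp, hempty, Set.image_empty, Real.sInf_empty, zero_add] using hc
  rw [← sub_le_iff_le_add]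
  refine le_csInf (hne.image _) ?_
  rintro _ ⟨q, hq, rfl⟩
  have hshift : ∑ s', q s' * v s' ≤ ∑ s', q s' * w s' + c :=
    calc ∑ s', q s' * v s' ≤ ∑ s', (q s' * w s' + q s' * c) :=
          sum_le_sum fun s' _ => by
            rw [← mul_add]; exact mul_le_mul_of_nonneg_left (hvw s') (hq.1 s').1
      _ = ∑ s', q s' * w s' + c := by rw [sum_add_distrib, ← sum_mul, hq.2, one_mul]
  linarith [minExp_le_sum Plow Pup s a hq v]

end minExp

section Bellman

variable {S A : Type*} [Fintype S] (Plow Pup : S → S → A → ℝ) (Rlow : S → A → ℝ) (γ : ℝ)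

theorem Fpess_le_Fpess_add (hγ : 0 ≤ γ) (π : S → A) {v w : S → ℝ} {c : ℝ} (hc : 0 ≤ c)
    (hvw : ∀ s', v s' ≤ w s' + c) (s : S) :
    Fpess Plow Pup Rlow γ v π s ≤ Fpess Plow Pup Rlow γ w π s + γ * c := by
  have := mul_le_mul_of_nonneg_left (minExp_le_minExp_add Plow Pup s (π s) hc hvw) hγ
  simp only [Fpess]
  linarith

theorem bddAbove_range_Gpess_summand {s : S} (hR : BddAbove (Set.range (Rlow s))) (v : S → ℝ) :
    BddAbove (Set.range fun a => Rlow s a + γ * minExp Plow Pup s a v) := by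
  obtain ⟨B, hB⟩ := hR
  refine ⟨B + |γ| * ‖v‖, ?_⟩
  rintro _ ⟨a, rfl⟩
  have hmin : γ * minExp Plow Pup s a v ≤ |γ| * ‖v‖ :=
    calc γ * minExp Plow Pup s a v ≤ |γ * minExp Plow Pup s a v| := le_abs_self _
      _ = |γ| * |minExp Plow Pup s a v| := abs_mul _ _
      _ ≤ |γ| * ‖v‖ :=
        mul_le_mul_of_nonneg_left (abs_minExp_le_norm Plow Pup s a v) (abs_nonneg γ)
  linarith [hB ⟨a, rfl⟩]

theorem Fpess_le_Gpess {s : S} (hR : BddAbove (Set.range (Rlow s))) (v : S → ℝ) (π : S → A) :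
    Fpess Plow Pup Rlow γ v π s ≤ Gpess Plow Pup Rlow γ v s :=
  le_ciSup (bddAbove_range_Gpess_summand Plow Pup Rlow γ hR v) (π s)

end Bellman

theorem nonpos_of_forall_le_mul_bound {S : Type*} [Finite S] {γ : ℝ} (hγ : γ < 1) {d : S → ℝ}
    (hd : ∀ c, 0 < c → (∀ s, d s ≤ c) → ∀ s, d s ≤ γ * c) (s : S) : d s ≤ 0 := by
  by_contra! hs
  have : Nonempty S := ⟨s⟩
  obtain ⟨s₀, hs₀⟩ := Finite.exists_max d
  have hpos : 0 < d s₀ := hs.trans_le (hs₀ s)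
  nlinarith [hd (d s₀) hpos hs₀ s₀]

theorem policy_value_le_optimal_general {S A : Type*} [Fintype S]
    (γ : ℝ) (hγ0 : 0 < γ) (hγ1 : γ < 1)
    (Plow Pup : S → S → A → ℝ)
    (Rlow : S → A → ℝ) (hRbdd : ∀ s, BddAbove (Set.range fun a => Rlow s a))
    (π : S → A)
    (Vpi : S → ℝ) (hVpi : (fun s => Fpess Plow Pup Rlow γ Vpi π s) = Vpi)
    (Vstar : S → ℝ) (hVstar : Gpess Plow Pup Rlow γ Vstar = Vstar) :
    ∀ s, Vpi s ≤ Vstar s := by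
  intro s
  refine sub_nonpos.1 <|
    nonpos_of_forall_le_mul_bound (d := fun s => Vpi s - Vstar s) hγ1 (fun c hc hle t => ?_) s
  have hshift : ∀ s', Vpi s' ≤ Vstar s' + c := fun s' => sub_le_iff_le_add'.1 (hle s')
  calc Vpi t - Vstar t
      = Fpess Plow Pup Rlow γ Vpi π t - Gpess Plow Pup Rlow γ Vstar t := by
        rw [congrFun hVpi t, congrFun hVstar t]
    _ ≤ Fpess Plow Pup Rlow γ Vstar π t + γ * c - Fpess Plow Pup Rlow γ Vstar π t :=
        sub_le_sub (Fpess_le_Fpess_add Plow Pup Rlow γ hγ0.le π hc.le hshift t)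
          (Fpess_le_Gpess Plow Pup Rlow γ (hRbdd t) Vstar π)
    _ = γ * c := add_sub_cancel_left _ _

/-- the value of any fixed policy is dominated by the pessimistic optimal
value: a fixed point of v ↦ F̲(v,π) is bounded above by the fixed point of G̲. -/
theorem policy_value_le_optimal {S A : Type*} [Fintype S] [Nonempty S] [Nonempty A]
    (γ : ℝ) (hγ0 : 0 < γ) (hγ1 : γ < 1)
    (Plow Pup : S → S → A → ℝ)
    (hP01 : ∀ s' s a, 0 ≤ Plow s' s a ∧ Pup s' s a ≤ 1)
    (hPle : ∀ s' s a, Plow s' s a ≤ Pup s' s a)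
    (hPsum : ∀ s a, (∑ s', Plow s' s a) ≤ 1 ∧ 1 ≤ ∑ s', Pup s' s a)
    (Rlow : S → A → ℝ) (hRbdd : ∀ s, BddAbove (Set.range fun a => Rlow s a))
    (π : S → A)
    (Vpi : S → ℝ) (hVpi : (fun s => Fpess Plow Pup Rlow γ Vpi π s) = Vpi)
    (Vstar : S → ℝ) (hVstar : Gpess Plow Pup Rlow γ Vstar = Vstar) :
    ∀ s, Vpi s ≤ Vstar s :=
  policy_value_le_optimal_general γ hγ0 hγ1 Plow Pup Rlow hRbdd π Vpi hVpi Vstar hVstar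
end
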